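/- Let g be the Gowdy-form metric determined by C¹ functions g00, g01, g11, R, E, Q of (t,x) ∈ (0,δ)×ℝ with E ≠ 0, R ≠ 0 and g00·g11 − g01² ≠ 0 everywhere. Then the contracted Christoffel quantities of g satisfy Γ₂(t,x) = 0 and Γ₃(t,x) = 0 for all (t,x). -/
import Mathlib


/-- Partial derivative `∂_k f` of a scalar function of `(t, x)`:
`∂₀ = ∂/∂t`, `∂₁ = ∂/∂x`, and `∂₂ = ∂₃ = 0`. -/
noncomputable def pdG (f : ℝ × ℝ → ℝ) (k : Fin 4) (p : ℝ × ℝ) : ℝ :=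
  if k = 0 then deriv (fun s => f (s, p.2)) p.1
  else if k = 1 then deriv (fun s => f (p.1, s)) p.2
  else 0

/-- The Gowdy-form metric determined by functions g00, g01, g11, R, E, Q of (t, x)
(equation (3.9) of the paper). -/
noncomputable def gowdy (g00 g01 g11 R E Q : ℝ × ℝ → ℝ) (p : ℝ × ℝ) : Matrix (Fin 4) (Fin 4) ℝ :=
  !![g00 p, g01 p, 0, 0;
     g01 p, g11 p, 0, 0;
     0, 0, R p * E p, R p * E p * Q p;
     0, 0, R p * E p * Q p, R p * E p * (Q p) ^ 2 + R p / E p]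

/-- The Christoffel quantities Γ_{kmi} = (1/2)(∂_k g_{mi} + ∂_i g_{mk} − ∂_m g_{ki}). -/
noncomputable def ΓlowG (g : ℝ × ℝ → Matrix (Fin 4) (Fin 4) ℝ) (k m i : Fin 4)
    (p : ℝ × ℝ) : ℝ :=
  (1 / 2) * (pdG (fun q => g q m i) k p + pdG (fun q => g q m k) i p -
    pdG (fun q => g q k i) m p)

/-- The contracted Christoffel quantities Γ_m = Σ_{k,i} g^{ki} Γ_{kmi}. -/
noncomputable def ΓcontrG (g : ℝ × ℝ → Matrix (Fin 4) (Fin 4) ℝ) (m : Fin 4)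
    (p : ℝ × ℝ) : ℝ :=
  ∑ k : Fin 4, ∑ i : Fin 4, (g p)⁻¹ k i * ΓlowG g k m i p


lemma adj_off_gowdy (a b c d e f : ℝ) (i j : Fin 4) (h : (i < 2 ∧ 2 ≤ j) ∨ (j < 2 ∧ 2 ≤ i)) :
    (Matrix.adjugate !![a, b, 0, 0; b, c, 0, 0; 0, 0, d, e; 0, 0, e, f]) i j = 0 := by
  fin_cases i <;> fin_cases j <;> simp_all <;>
    simp [Matrix.adjugate_fin_succ_eq_det_submatrix, Matrix.det_fin_three,
      Fin.succAbove, Matrix.submatrix_apply, Fin.ext_iff, Matrix.vecHead, Matrix.vecTail]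

lemma inv_off_gowdy (g00 g01 g11 R E Q : ℝ × ℝ → ℝ) (p : ℝ × ℝ) (i j : Fin 4)
    (h : (i < 2 ∧ 2 ≤ j) ∨ (j < 2 ∧ 2 ≤ i)) :
    ((gowdy g00 g01 g11 R E Q p)⁻¹) i j = 0 := by
  rw [Matrix.inv_def]
  simp only [Matrix.smul_apply, gowdy, smul_eq_mul]
  rw [adj_off_gowdy _ _ _ _ _ _ _ _ h, mul_zero]

/-- For any metric of Gowdy form with C¹ components, the contracted Christoffel
quantities satisfy Γ₂ ≡ Γ₃ ≡ 0 (Section 3.3 of the paper). -/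
theorem stmt_14 (δ : ℝ) (hδ : 0 < δ) (g00 g01 g11 R E Q : ℝ × ℝ → ℝ)
    (hg00 : ContDiffOn ℝ 1 g00 (Set.Ioo (0 : ℝ) δ ×ˢ (Set.univ : Set ℝ)))
    (hg01 : ContDiffOn ℝ 1 g01 (Set.Ioo (0 : ℝ) δ ×ˢ (Set.univ : Set ℝ)))
    (hg11 : ContDiffOn ℝ 1 g11 (Set.Ioo (0 : ℝ) δ ×ˢ (Set.univ : Set ℝ)))
    (hR : ContDiffOn ℝ 1 R (Set.Ioo (0 : ℝ) δ ×ˢ (Set.univ : Set ℝ)))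
    (hE : ContDiffOn ℝ 1 E (Set.Ioo (0 : ℝ) δ ×ˢ (Set.univ : Set ℝ)))
    (hQ : ContDiffOn ℝ 1 Q (Set.Ioo (0 : ℝ) δ ×ˢ (Set.univ : Set ℝ)))
    (hEne : ∀ p ∈ Set.Ioo (0 : ℝ) δ ×ˢ (Set.univ : Set ℝ), E p ≠ 0)
    (hRne : ∀ p ∈ Set.Ioo (0 : ℝ) δ ×ˢ (Set.univ : Set ℝ), R p ≠ 0)
    (hXi : ∀ p ∈ Set.Ioo (0 : ℝ) δ ×ˢ (Set.univ : Set ℝ),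
      g00 p * g11 p - (g01 p) ^ 2 ≠ 0) :
    ∀ p ∈ Set.Ioo (0 : ℝ) δ ×ˢ (Set.univ : Set ℝ),
      ΓcontrG (gowdy g00 g01 g11 R E Q) 2 p = 0 ∧
      ΓcontrG (gowdy g00 g01 g11 R E Q) 3 p = 0 := by
  intro p hp
  have h := inv_off_gowdy g00 g01 g11 R E Q p
  constructor <;>
  · unfold ΓcontrG
    simp only [Fin.sum_univ_four,
      h 0 2 (by simp), h 0 3 (by simp), h 1 2 (by simp), h 1 3 (by simp),
      h 2 0 (by simp), h 2 1 (by simp), h 3 0 (by simp), h 3 1 (by simp), zero_mul]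
    simp [ΓlowG, pdG, gowdy]
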